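/- arXiv:2412.13706 — 9 statements merged into one kernel-verified Lean document; each statement's English description precedes it below -/
import Mathlib

section
/- Let D be a nontrivial bounded distributive lattice and let Id(D) be the lattice of all ideals of D, ordered by inclusion. If M is a maximal ideal of Id(D), then the set e⁻¹[M] = { a ∈ D : the principal ideal ↓a belongs to M } is a maximal ideal of D. -/
/-- If `M` is a maximal ideal of the lattice `Id(D)` of all ideals of a nontrivial bounded
distributive lattice `D`, then `e⁻¹[M] = { a : D | ↓a ∈ M }` is a maximal ideal of `D`,
where `e : D → Id(D)` is the principal-ideal embedding. -/
theorem stmt_4 (D : Type*) [DistribLattice D] [BoundedOrder D] (h : (⊥ : D) ≠ ⊤)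
    (M : Order.Ideal (Order.Ideal D)) (hMproper : M.IsProper)
    (hMmax : ∀ J : Order.Ideal (Order.Ideal D), J.IsProper → ¬ M < J) :
    ∃ N : Order.Ideal D, (N : Set D) = { a : D | Order.Ideal.principal a ∈ M } ∧
      N.IsProper ∧ ∀ J : Order.Ideal D, J.IsProper → ¬ N < J := by
  set N : Order.Ideal D :=
    { carrier := { a : D | Order.Ideal.principal a ∈ M }
      lower' := fun a b hba ha => M.lower (by
        rw [Order.Ideal.principal_le_iff]
        exact Order.Ideal.mem_principal.2 hba) ha
      nonempty' := by
        obtain ⟨I, hI⟩ := M.nonempty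
        exact ⟨⊥, M.lower (by
          rw [Order.Ideal.principal_le_iff]; exact I.bot_mem) hI⟩
      directed' := fun a ha b hb => ⟨a ⊔ b, by
        have : Order.Ideal.principal (a ⊔ b) ≤
            Order.Ideal.principal a ⊔ Order.Ideal.principal b := by
          rw [Order.Ideal.principal_le_iff, Order.Ideal.mem_sup]
          exact ⟨a, Order.Ideal.mem_principal_self, b, Order.Ideal.mem_principal_self, le_rfl⟩
        exact M.lower this (Order.Ideal.sup_mem ha hb), le_sup_left, le_sup_right⟩ } with hN
  have hNmem : ∀ a : D, a ∈ N ↔ Order.Ideal.principal a ∈ M := fun a => Iff.rfl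
  have hNtop : (⊤ : D) ∉ N := by
    rw [hNmem, Order.Ideal.principal_top]
    exact hMproper.top_notMem
  refine ⟨N, rfl, Order.Ideal.isProper_of_notMem hNtop, ?_⟩
  intro J hJ hNJ
  obtain ⟨b, hbJ, hbN⟩ := Set.exists_of_ssubset hNJ
  -- the ideal M ⊔ principal ↓b is strictly bigger than M, hence not proper, hence = ⊤
  have hbM : Order.Ideal.principal b ∉ M := hbN
  have hlt : M < M ⊔ Order.Ideal.principal (Order.Ideal.principal b) :=
    Order.Ideal.lt_sup_principal_of_notMem hbM
  have hnotproper := fun hp => hMmax _ hp hlt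
  have htop : Order.Ideal.principal (⊤ : D) ∈
      M ⊔ Order.Ideal.principal (Order.Ideal.principal b) := by
    by_contra hc
    exact hnotproper (Order.Ideal.isProper_of_notMem hc)
  rw [Order.Ideal.mem_sup] at htop
  obtain ⟨I, hIM, J', hJ', hle⟩ := htop
  have hJ'b : J' ≤ Order.Ideal.principal b := Order.Ideal.mem_principal.1 hJ'
  have hle' : Order.Ideal.principal (⊤ : D) ≤ I ⊔ Order.Ideal.principal b :=
    hle.trans (sup_le_sup_left hJ'b I)
  have htopmem : (⊤ : D) ∈ I ⊔ Order.Ideal.principal b :=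
    Order.Ideal.principal_le_iff.1 hle'
  rw [Order.Ideal.mem_sup] at htopmem
  obtain ⟨i, hiI, j, hj, hij⟩ := htopmem
  have hiN : i ∈ N := by
    rw [hNmem]
    exact M.lower (Order.Ideal.principal_le_iff.2 hiI) hIM
  have hiJ : i ∈ J := hNJ.le hiN
  have : (⊤ : D) ∈ J := J.lower (hij.trans (sup_le_sup_left (Order.Ideal.mem_principal.1 hj) i))
    (Order.Ideal.sup_mem hiJ hbJ)
  exact hJ.top_notMem this
end

section
/- Let D be a bounded distributive lattice in which every element can be written as a finite meet of inf-prime elements. Then D admits relative pseudocomplements: for all a, b ∈ D there exists c ∈ D such that for every r ∈ D, a ⊓ r ≤ b if and only if r ≤ c (so D carries a Heyting implication). -/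
/-- A bounded distributive lattice in which every element is a finite meet of inf-prime
elements admits relative pseudocomplements (a Heyting implication). -/
theorem stmt_5 (D : Type*) [DistribLattice D] [BoundedOrder D]
    (hgen : ∀ a : D, ∃ s : Finset D, (∀ t ∈ s, InfPrime t) ∧ a = s.inf id) :
    ∀ a b : D, ∃ c : D, ∀ r : D, a ⊓ r ≤ b ↔ r ≤ c := by
  classical
  intro a b
  obtain ⟨s, hs, hb⟩ := hgen b
  refine ⟨(s.filter (fun t => ¬ a ≤ t)).inf id, fun r => ⟨fun h => ?_, fun h => ?_⟩⟩
  · apply Finset.le_inf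
    intro t ht
    obtain ⟨hts, hat⟩ := Finset.mem_filter.mp ht
    have h1 : a ⊓ r ≤ t := h.trans (hb ▸ Finset.inf_le hts)
    exact ((hs t hts).2 h1).resolve_left hat
  · rw [hb]
    apply Finset.le_inf
    intro t hts
    by_cases hat : a ≤ t
    · exact inf_le_left.trans hat
    · exact inf_le_right.trans
        (h.trans (Finset.inf_le (Finset.mem_filter.mpr ⟨hts, hat⟩)))
end

section
/- Every Priestley space embeds as a closed subspace of a power of the two-element chain: if X is a Priestley space and Z is the set of clopen upper sets of X, then the map f : X → (Z → Bool) given by f(x)(U) = (x ∈ U) is injective, continuous, order-preserving and order-reflecting (x ≤ y iff f(x) ≤ f(y) pointwise, where false < true), is a topological embedding, and has closed range; here Z → Bool carries the product topology (Bool discrete) and the pointwise order. -/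
open Classical in
/-- The evaluation map from a Priestley space `X` to `Z → Bool`, where `Z` is the set of
clopen upper sets of `X`: `f x U = (x ∈ U)`. -/
noncomputable def priestleyEval (X : Type*) [TopologicalSpace X] [PartialOrder X]
    (x : X) (U : {U : Set X // IsClopen U ∧ IsUpperSet U}) : Bool :=
  decide (x ∈ U.1)

/-! The separation axiom says exactly that the clopen upper sets detect the order, so the
evaluation map is an order embedding; it is continuous because each coordinate is the
indicator of a clopen set, and a continuous injection from a compact space into the
Hausdorff space `Z → Bool` is a closed embedding. -/

section PriestleyEval

variable {X : Type*} [TopologicalSpace X] [PartialOrder X]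

theorem priestleyEval_eq_true_iff {x : X} {U : {U : Set X // IsClopen U ∧ IsUpperSet U}} :
    priestleyEval X x U = true ↔ x ∈ U.1 := by
  simp [priestleyEval]

theorem continuous_priestleyEval : Continuous (priestleyEval X) := by
  refine continuous_pi fun U => (continuous_bool_rng true).2 ?_
  convert U.2.1
  ext x
  exact priestleyEval_eq_true_iff

theorem monotone_priestleyEval : Monotone (priestleyEval X) := by
  intro x y hxy U
  rw [Bool.le_iff_imp, priestleyEval_eq_true_iff, priestleyEval_eq_true_iff]
  exact fun hx => U.2.2 hxy hx

theorem priestleyEval_le_priestleyEval_iff [PriestleySpace X] {x y : X} :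
    priestleyEval X x ≤ priestleyEval X y ↔ x ≤ y := by
  refine ⟨fun h => ?_, fun hxy => monotone_priestleyEval hxy⟩
  by_contra hxy
  obtain ⟨U, hU, hUupper, hx, hy⟩ := PriestleySpace.priestley hxy
  have hxy' := Bool.le_iff_imp.1 (h ⟨U, hU, hUupper⟩)
  rw [priestleyEval_eq_true_iff, priestleyEval_eq_true_iff] at hxy'
  exact hy (hxy' hx)

theorem priestleyEval_injective [PriestleySpace X] : Function.Injective (priestleyEval X) :=
  fun _ _ h => le_antisymm (priestleyEval_le_priestleyEval_iff.1 h.le)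
    (priestleyEval_le_priestleyEval_iff.1 h.ge)

theorem isClosedEmbedding_priestleyEval [PriestleySpace X] [CompactSpace X] :
    Topology.IsClosedEmbedding (priestleyEval X) :=
  continuous_priestleyEval.isClosedEmbedding priestleyEval_injective

end PriestleyEval

/-- Every Priestley space embeds as a closed subspace of a power of the two-element chain:
the evaluation map into `Z → Bool` (`Z` the clopen upper sets, `Bool` discrete with
`false < true`, product topology and pointwise order) is injective, continuous,
order-preserving and order-reflecting, a topological embedding, and has closed range. -/
theorem stmt_9 (X : Type*) [TopologicalSpace X] [PartialOrder X] [PriestleySpace X]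
    [CompactSpace X] :
    Function.Injective (priestleyEval X) ∧
    Continuous (priestleyEval X) ∧
    (∀ x y : X, x ≤ y ↔ priestleyEval X x ≤ priestleyEval X y) ∧
    Topology.IsEmbedding (priestleyEval X) ∧
    IsClosed (Set.range (priestleyEval X)) :=
  ⟨priestleyEval_injective, continuous_priestleyEval,
    fun _ _ => priestleyEval_le_priestleyEval_iff.symm,
    isClosedEmbedding_priestleyEval.isEmbedding, isClosedEmbedding_priestleyEval.isClosed_range⟩
end

section
/- For any set Z, the space (Z → Bool) with the product topology (Bool discrete) and the pointwise order is a bi-Esakia space: it is a compact topological space satisfying the Priestley separation axiom, and for every clopen subset U, both the lower closure ↓U = { x : ∃ y ∈ U, x ≤ y } and the upper closure ↑U = { x : ∃ y ∈ U, y ≤ x } are clopen. -/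
/-!
The Priestley axiom holds in each discrete factor `Bool`, hence in the product, and it makes the
order closed. So `↑U` is the projection of the closed set `{(y, x) | y ∈ U, y ≤ x}` along the
compact first factor, hence closed. It is open because a basic open neighbourhood of `y ∈ U`
constrains only finitely many coordinates: if `y ≤ x` and `f` agrees with `x` on those
coordinates, then the point equal to `y` there and to `⊥` elsewhere lies in `U` and below `f`. Dually for `↓U`.
-/

open Set

section Priestley

variable {α : Type*} [Preorder α] [TopologicalSpace α]

instance DiscreteTopology.priestleySpace [DiscreteTopology α] : PriestleySpace α where
  priestley {x _} hxy := ⟨Ici x, isClopen_discrete _, isUpperSet_Ici x, self_mem_Ici, hxy⟩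

instance Pi.priestleySpace {ι : Type*} {π : ι → Type*} [∀ i, Preorder (π i)]
    [∀ i, TopologicalSpace (π i)] [∀ i, PriestleySpace (π i)] : PriestleySpace (∀ i, π i) where
  priestley {x y} hxy := by
    obtain ⟨i, hi⟩ := not_forall.mp hxy
    obtain ⟨U, hU, hUup, hxU, hyU⟩ := exists_isClopen_upper_of_not_le hi
    exact ⟨Function.eval i ⁻¹' U, hU.preimage (continuous_apply i),
      fun a b hab ha => hUup (hab i) ha, hxU, hyU⟩

instance PriestleySpace.toOrderClosedTopology [PriestleySpace α] : OrderClosedTopology α where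
  isClosed_le' := by
    refine isOpen_compl_iff.mp (isOpen_iff_forall_mem_open.mpr fun p hp => ?_)
    obtain ⟨U, hU, hUup, hU₁, hU₂⟩ := exists_isClopen_upper_of_not_le hp
    exact ⟨U ×ˢ Uᶜ, fun q hq hle => hq.2 (hUup hle hq.1),
      hU.isOpen.prod hU.compl.isOpen, hU₁, hU₂⟩

end Priestley

section CompactClosure

variable {α : Type*} [Preorder α] [TopologicalSpace α] [CompactSpace α] [OrderClosedTopology α]
  {s : Set α}

theorem IsClosed.upperClosure_of_compactSpace (hs : IsClosed s) :
    IsClosed (upperClosure s : Set α) := by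
  have hgraph : IsClosed {p : α × α | p.1 ∈ s ∧ p.1 ≤ p.2} :=
    (hs.preimage continuous_fst).inter isClosed_le_prod
  convert isClosedMap_snd_of_compactSpace _ hgraph using 1
  ext x
  simp [mem_upperClosure]

theorem IsClosed.lowerClosure_of_compactSpace (hs : IsClosed s) :
    IsClosed (lowerClosure s : Set α) :=
  have : CompactSpace αᵒᵈ := ‹CompactSpace α›
  IsClosed.upperClosure_of_compactSpace (α := αᵒᵈ) hs

end CompactClosure

section DiscretePi

variable {ι : Type*} {π : ι → Type*} [∀ i, Preorder (π i)] [∀ i, TopologicalSpace (π i)]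
  [∀ i, DiscreteTopology (π i)] {s : Set (∀ i, π i)}

theorem IsOpen.upperClosure_pi [∀ i, OrderBot (π i)] (hs : IsOpen s) :
    IsOpen (upperClosure s : Set (∀ i, π i)) := by
  classical
  refine isOpen_iff_forall_mem_open.mpr ?_
  rintro x ⟨y, hy, hyx⟩
  obtain ⟨I, u, hu, hIu⟩ := isOpen_pi_iff.mp hs y hy
  refine ⟨(I : Set ι).pi fun i => {x i}, ?_, isOpen_set_pi I.finite_toSet fun _ _ =>
    isOpen_discrete _, fun i _ => rfl⟩
  intro f hf
  have hyf : ∀ i ∈ I, y i ≤ f i := fun i hi => (hf i hi).symm ▸ hyx i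
  refine ⟨(I : Set ι).piecewise y ⊥, hIu fun i hi => ?_, fun i => ?_⟩
  · rw [piecewise_eq_of_mem _ _ _ hi]
    exact (hu i hi).2
  · by_cases hi : i ∈ (I : Set ι)
    · rw [piecewise_eq_of_mem _ _ _ hi]
      exact hyf i hi
    · rw [piecewise_eq_of_notMem _ _ _ hi]
      exact bot_le

theorem IsOpen.lowerClosure_pi [∀ i, OrderTop (π i)] (hs : IsOpen s) :
    IsOpen (lowerClosure s : Set (∀ i, π i)) :=
  IsOpen.upperClosure_pi (π := fun i => (π i)ᵒᵈ) hs

end DiscretePi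

/-- For any set `Z`, the space `Z → Bool` (product topology, `Bool` discrete, pointwise
order) is a bi-Esakia space: it is compact, satisfies the Priestley separation axiom, and
the lower closure and the upper closure of every clopen set are clopen. -/
theorem stmt_10 (Z : Type*) :
    CompactSpace (Z → Bool) ∧
    (∀ x y : Z → Bool, ¬ x ≤ y →
      ∃ U : Set (Z → Bool), IsClopen U ∧ IsUpperSet U ∧ x ∈ U ∧ y ∉ U) ∧
    (∀ U : Set (Z → Bool), IsClopen U →
      IsClopen (↑(lowerClosure U) : Set (Z → Bool)) ∧
      IsClopen (↑(upperClosure U) : Set (Z → Bool))) :=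
  ⟨inferInstance, fun _ _ => exists_isClopen_upper_of_not_le, fun _ hU =>
    ⟨⟨hU.isClosed.lowerClosure_of_compactSpace, hU.isOpen.lowerClosure_pi⟩,
      ⟨hU.isClosed.upperClosure_of_compactSpace, hU.isOpen.upperClosure_pi⟩⟩⟩
end

section
/- Every nonempty S4-space has a quasi-maximal point: if X is a nonempty compact Hausdorff totally disconnected topological space and R is a reflexive and transitive continuous relation on X, then there exists x ∈ X such that for all y ∈ X, R x y implies R y x. -/
/-- Every nonempty S4-space has a quasi-maximal point: if `X` is a nonempty Stone space and
`R` is a reflexive and transitive continuous relation on `X`, then there is `x` with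
`R x y → R y x` for all `y`. -/
theorem stmt_11 (X : Type*) [TopologicalSpace X] [CompactSpace X] [T2Space X]
    [TotallyDisconnectedSpace X] [Nonempty X] (R : X → X → Prop)
    (hRcl : ∀ x : X, IsClosed {y : X | R x y})
    (hRpre : ∀ U : Set X, IsClopen U → IsClopen {x : X | ∃ y ∈ U, R x y})
    (hrefl : Reflexive R) (htrans : Transitive R) :
    ∃ x : X, ∀ y : X, R x y → R y x := by
  have : ∃ m, ∀ a, R m a → R a m := by
    apply exists_maximal_of_nonempty_chains_bounded (r := R)
      (fun c hc hcne => ?_) (fun {a b c} hab hbc => htrans hab hbc)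
    have hne : Nonempty c := hcne.to_subtype
    have key : (⋂ x : c, {y : X | R x.1 y}).Nonempty := by
      apply IsCompact.nonempty_iInter_of_directed_nonempty_isCompact_isClosed
      · rintro ⟨a, ha⟩ ⟨b, hb⟩
        rcases eq_or_ne a b with rfl | hab
        · exact ⟨⟨a, ha⟩, le_refl _, le_refl _⟩
        · rcases hc ha hb hab with h | h
          · exact ⟨⟨b, hb⟩, fun y hy => htrans h hy, le_refl _⟩
          · exact ⟨⟨a, ha⟩, le_refl _, fun y hy => htrans h hy⟩
      · exact fun x => ⟨x.1, hrefl x.1⟩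
      · exact fun x => (hRcl x.1).isCompact
      · exact fun x => hRcl x.1
    obtain ⟨z, hz⟩ := key
    exact ⟨z, fun a ha => Set.mem_iInter.1 hz ⟨a, ha⟩⟩
  exact this
end

section
/- Fine's Strong Maximality Principle: let X be a compact Hausdorff totally disconnected topological space, let R be a transitive continuous relation on X, and let C ⊆ X be a nonempty closed subset. Then C contains a point quasi-maximal in C: there exists x ∈ C such that for all y ∈ C, R x y implies R y x. -/
/-! Zorn's lemma for the reflexive closure `ReflGen R`, a preorder on `C`: a maximal element of
that preorder is quasi-maximal for `R`. Chains are bounded because the closed sets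
`C ∩ {y | ReflGen R a y}`, for `a` in a chain, form a directed family of nonempty closed subsets
of the compact set `C`, so they have a common point. -/

open Set Relation

section

variable {X : Type*} [TopologicalSpace X] {R : X → X → Prop}

theorem isClosed_setOf_reflGen [T1Space X] (hR : ∀ x, IsClosed {y | R x y}) (x : X) :
    IsClosed {y | ReflGen R x y} := by
  simpa only [reflGen_iff, ofPred_or, ofPred_eq_eq_singleton] using isClosed_singleton.union (hR x)

theorem IsCompact.exists_forall_reflGen_of_isChain [T1Space X] [IsTrans X R]
    (hR : ∀ x, IsClosed {y | R x y}) {C : Set X} (hC : IsCompact C) {c : Set X} (hcC : c ⊆ C)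
    (hc : IsChain (ReflGen R) c) (hcne : c.Nonempty) : ∃ y ∈ C, ∀ a ∈ c, ReflGen R a y := by
  by_contra! hnone
  have : Nonempty c := hcne.to_subtype
  have hdir : Directed (· ⊇ ·) fun a : c => {y | ReflGen R a y} :=
    hc.directed.mono_comp (g := fun a => {y | ReflGen R a y}) (ReflGen R)
      fun _ _ hab _ hb => _root_.trans hab hb
  obtain ⟨a, ha⟩ := hC.elim_directed_family_closed _ (fun a : c => isClosed_setOf_reflGen hR a)
    (by simpa [eq_empty_iff_forall_notMem] using hnone) hdir
  exact (eq_empty_iff_forall_notMem.mp ha) a ⟨hcC a.2, ReflGen.refl⟩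

theorem IsCompact.exists_quasiMaximal [T1Space X] [IsTrans X R]
    (hR : ∀ x, IsClosed {y | R x y}) {C : Set X} (hC : IsCompact C) (hCne : C.Nonempty) :
    ∃ x ∈ C, ∀ y ∈ C, R x y → R y x := by
  have : Nonempty C := hCne.to_subtype
  obtain ⟨m, hm⟩ := exists_maximal_of_nonempty_chains_bounded (r := fun a b : C => ReflGen R a b)
    (fun c hc hcne => by
      obtain ⟨y, hyC, hy⟩ := hC.exists_forall_reflGen_of_isChain hR (Subtype.coe_image_subset C c)
        (hc.image_of_map_rel _ _ Subtype.val fun _ _ => id) (hcne.image _)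
      exact ⟨⟨y, hyC⟩, fun a ha => hy a (mem_image_of_mem _ ha)⟩)
    (fun hab hbc => _root_.trans hab hbc)
  refine ⟨m, m.2, fun y hyC hmy => ?_⟩
  rcases hm ⟨y, hyC⟩ (ReflGen.single hmy) with _ | hym
  · exact hmy
  · exact hym

end

theorem stmt_12_general (X : Type*) [TopologicalSpace X] [CompactSpace X] [T2Space X]
    (R : X → X → Prop)
    (hRcl : ∀ x : X, IsClosed {y : X | R x y})
    (htrans : Transitive R)
    (C : Set X) (hC : IsClosed C) (hCne : C.Nonempty) :
    ∃ x ∈ C, ∀ y ∈ C, R x y → R y x :=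
  have : IsTrans X R := ⟨fun _ _ _ hab hbc => htrans hab hbc⟩
  hC.isCompact.exists_quasiMaximal hRcl hCne

/-- Fine's Strong Maximality Principle: if `X` is a Stone space, `R` a transitive continuous
relation on `X`, and `C` a nonempty closed subset, then `C` contains a point quasi-maximal
in `C`. -/
theorem stmt_12 (X : Type*) [TopologicalSpace X] [CompactSpace X] [T2Space X]
    [TotallyDisconnectedSpace X] (R : X → X → Prop)
    (hRcl : ∀ x : X, IsClosed {y : X | R x y})
    (hRpre : ∀ U : Set X, IsClopen U → IsClopen {x : X | ∃ y ∈ U, R x y})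
    (htrans : Transitive R)
    (C : Set X) (hC : IsClosed C) (hCne : C.Nonempty) :
    ∃ x ∈ C, ∀ y ∈ C, R x y → R y x :=
  stmt_12_general X R hRcl htrans C hC hCne
end

section
/- The composition of continuous relations on a Stone space is continuous: if X is a compact Hausdorff totally disconnected topological space and R, S are continuous relations on X, then the composite relation R∘S, defined by (R∘S) x z iff there exists y with R x y and S y z, is continuous. -/
/-- The composition of continuous relations on a Stone space is continuous, where
`(R ∘ S) x z ↔ ∃ y, R x y ∧ S y z`. -/
theorem stmt_16 (X : Type*) [TopologicalSpace X] [CompactSpace X] [T2Space X]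
    [TotallyDisconnectedSpace X] (R S : X → X → Prop)
    (hRcl : ∀ x : X, IsClosed {y : X | R x y})
    (hRpre : ∀ U : Set X, IsClopen U → IsClopen {x : X | ∃ y ∈ U, R x y})
    (hScl : ∀ x : X, IsClosed {y : X | S x y})
    (hSpre : ∀ U : Set X, IsClopen U → IsClopen {x : X | ∃ y ∈ U, S x y}) :
    (∀ x : X, IsClosed {z : X | ∃ y : X, R x y ∧ S y z}) ∧
    (∀ U : Set X, IsClopen U → IsClopen {x : X | ∃ z ∈ U, ∃ y : X, R x y ∧ S y z}) := by
  constructor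
  · intro x
    apply isClosed_of_closure_subset
    intro z hz
    -- index type: clopen neighborhoods of z
    by_cases hne : Nonempty {V : Set X // IsClopen V ∧ z ∈ V}
    case neg =>
      exact absurd ⟨⟨Set.univ, isClopen_univ, Set.mem_univ z⟩⟩ hne
    let K : {V : Set X // IsClopen V ∧ z ∈ V} → Set X :=
      fun V => {y | R x y} ∩ {y | ∃ w ∈ V.1, S y w}
    have hKclosed : ∀ V, IsClosed (K V) :=
      fun V => (hRcl x).inter (hSpre V.1 V.2.1).isClosed
    have hKne : ∀ V, (K V).Nonempty := by
      intro V
      obtain ⟨w, hwV, y, hRy, hSy⟩ :=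
        mem_closure_iff.mp hz V.1 V.2.1.isOpen V.2.2
      exact ⟨y, hRy, w, hwV, hSy⟩
    have hdir : Directed (· ⊇ ·) K := by
      intro V V'
      refine ⟨⟨V.1 ∩ V'.1, V.2.1.inter V'.2.1, V.2.2, V'.2.2⟩, ?_, ?_⟩ <;>
        · rintro y ⟨hRy, w, ⟨hw1, hw2⟩, hSw⟩
          first
          | exact ⟨hRy, w, hw1, hSw⟩
          | exact ⟨hRy, w, hw2, hSw⟩
    obtain ⟨y, hy⟩ := IsCompact.nonempty_iInter_of_directed_nonempty_isCompact_isClosed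
      K hdir hKne (fun V => (hKclosed V).isCompact) hKclosed
    have hRy : R x y := (Set.mem_iInter.mp hy ⟨Set.univ, isClopen_univ, Set.mem_univ z⟩).1
    refine ⟨y, hRy, ?_⟩
    by_contra hSz
    have hzopen : z ∈ {w | S y w}ᶜ := hSz
    obtain ⟨V, hVclopen, hzV, hVsub⟩ :=
      compact_exists_isClopen_in_isOpen (hScl y).isOpen_compl hzopen
    obtain ⟨-, w, hwV, hSw⟩ := Set.mem_iInter.mp hy ⟨V, hVclopen, hzV⟩
    exact hVsub hwV hSw
  · intro U hU
    have : {x : X | ∃ z ∈ U, ∃ y : X, R x y ∧ S y z}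
        = {x : X | ∃ y ∈ {y : X | ∃ z ∈ U, S y z}, R x y} := by
      ext x
      constructor
      · rintro ⟨z, hz, y, hRy, hSy⟩; exact ⟨y, ⟨z, hz, hSy⟩, hRy⟩
      · rintro ⟨y, ⟨z, hz, hSy⟩, hRy⟩; exact ⟨z, hz, y, hRy, hSy⟩
    rw [this]
    exact hRpre _ (hSpre U hU)
end

section
/- There exist a compact Hausdorff totally disconnected topological space X with a partial order ≤ such that X is an Esakia space (X satisfies the Priestley separation axiom and the lower closure of every clopen subset of X is clopen), a closed subset C ⊆ X, and a subset U ⊆ C that is clopen in the subspace topology of C, such that the lower closure of U computed in C, namely { x ∈ C : ∃ y ∈ U, x ≤ y }, is not clopen in C. In particular, the restriction of a continuous (partial-order) relation on a Stone space to a closed subspace need not be continuous. -/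
open OnePoint Set Filter

abbrev X18 : Type := OnePoint ℕ × Bool

def P18 : PartialOrder X18 where
  le p q := p.1 = q.1 ∧ p.2 ≤ q.2
  le_refl p := ⟨rfl, le_refl _⟩
  le_trans p q r h h' := ⟨h.1.trans h'.1, le_trans h.2 h'.2⟩
  le_antisymm p q h h' := Prod.ext h.1 (le_antisymm h.2 h'.2)

lemma le18 (p q : X18) : (P18.le p q) ↔ p.1 = q.1 ∧ p.2 ≤ q.2 := Iff.rfl

lemma clopen_some (n : ℕ) : IsClopen ({(n : OnePoint ℕ)} : Set (OnePoint ℕ)) := by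
  constructor
  · exact isClosed_singleton
  · rw [OnePoint.isOpen_iff_of_notMem (by simp [OnePoint.infty_ne_coe])]
    exact isOpen_discrete _

lemma tendsto_some : Tendsto (fun n : ℕ => ((n : OnePoint ℕ), false)) atTop
    (nhds ((∞ : OnePoint ℕ), false)) := by
  refine Tendsto.prodMk_nhds ?_ tendsto_const_nhds
  have h : Tendsto ((↑) : ℕ → OnePoint ℕ) (coclosedCompact ℕ) (nhds ∞) :=
    OnePoint.tendsto_coe_infty
  refine h.mono_left (le_of_eq ?_)
  rw [coclosedCompact_eq_cocompact, cocompact_eq_cofinite, Nat.cofinite_eq_atTop]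

/-- There is an Esakia space `X` (a Stone space with a partial order satisfying the
Priestley separation axiom, in which the lower closure of each clopen set is clopen),
a closed subset `C ⊆ X`, and a subset `U` of `C` clopen in the subspace topology, whose
lower closure computed inside `C` is not clopen in `C`: the restriction of a continuous
order-relation on a Stone space to a closed subspace need not be continuous. -/
theorem stmt_18 :
    ∃ (X : Type) (_ : TopologicalSpace X) (_ : PartialOrder X),
      CompactSpace X ∧ T2Space X ∧ TotallyDisconnectedSpace X ∧
      (∀ x y : X, ¬ x ≤ y → ∃ U : Set X, IsClopen U ∧ IsUpperSet U ∧ x ∈ U ∧ y ∉ U) ∧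
      (∀ U : Set X, IsClopen U → IsClopen (↑(lowerClosure U) : Set X)) ∧
      ∃ C : Set X, IsClosed C ∧
        ∃ U : Set C, IsClopen U ∧
          ¬ IsClopen {x : C | ∃ y ∈ U, (x : X) ≤ (y : X)} := by
  classical
  letI := P18
  refine ⟨X18, inferInstance, P18, inferInstance, inferInstance, inferInstance, ?_, ?_, ?_⟩
  · -- Priestley separation
    rintro ⟨a, i⟩ ⟨b, j⟩ hxy
    by_cases hab : a = b
    · subst hab
      have hij : ¬ i ≤ j := fun h => hxy ⟨rfl, h⟩
      have hi : i = true := by revert hij; cases i <;> cases j <;> decide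
      have hj : j = false := by revert hij; cases i <;> cases j <;> decide
      refine ⟨Prod.snd ⁻¹' {true}, (isClopen_discrete _).preimage continuous_snd, ?_, hi, ?_⟩
      · intro p q hpq hp
        have h1 : p.2 = true := hp
        have h2 : p.2 ≤ q.2 := hpq.2
        show q.2 ∈ ({true} : Set Bool)
        exact le_antisymm (Bool.le_true _) (h1 ▸ h2)
      · simp [hj]
    · cases b with
      | infty =>
        cases a with
        | infty => exact absurd rfl hab
        | coe n =>
          refine ⟨Prod.fst ⁻¹' {(n : OnePoint ℕ)},
            (clopen_some n).preimage continuous_fst, ?_, rfl, ?_⟩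
          · intro p q hpq hp
            show q.1 ∈ ({(n : OnePoint ℕ)} : Set (OnePoint ℕ))
            have : p.1 = q.1 := hpq.1
            rw [← this]; exact hp
          · simp only [mem_preimage, mem_singleton_iff]; exact Ne.symm hab
      | coe m =>
        refine ⟨Prod.fst ⁻¹' ({(m : OnePoint ℕ)}ᶜ),
          ((clopen_some m).compl).preimage continuous_fst, ?_, ?_, ?_⟩
        · intro p q hpq hp
          show q.1 ∈ ({(m : OnePoint ℕ)}ᶜ : Set (OnePoint ℕ))
          have : p.1 = q.1 := hpq.1
          rw [← this]; exact hp
        · exact hab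
        · simp
  · -- Esakia condition
    intro U hU
    have key : (↑(lowerClosure U) : Set X18) =
        U ∪ ((fun p : X18 => (p.1, true)) ⁻¹' U ∩ Prod.snd ⁻¹' {false}) := by
      ext ⟨a, i⟩
      simp only [SetLike.mem_coe, mem_lowerClosure, mem_union, mem_inter_iff, mem_preimage,
        mem_singleton_iff]
      constructor
      · rintro ⟨⟨b, j⟩, hbU, hle⟩
        have hab : a = b := hle.1
        have hij : i ≤ j := hle.2
        subst hab
        cases j with
        | false =>
          have : i = false := le_antisymm hij (Bool.false_le _)
          subst this; exact Or.inl hbU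
        | true =>
          cases i with
          | true => exact Or.inl hbU
          | false => exact Or.inr ⟨hbU, rfl⟩
      · rintro (h | ⟨h1, h2⟩)
        · exact ⟨(a, i), h, le_refl _⟩
        · subst h2
          exact ⟨(a, true), h1, ⟨rfl, Bool.false_le _⟩⟩
    rw [key]
    exact hU.union ((hU.preimage (continuous_fst.prodMk continuous_const)).inter
      ((isClopen_discrete _).preimage continuous_snd))
  · -- The closed subspace
    refine ⟨{p : X18 | p.2 = false ∨ p.1 = ∞}, ?_, ?_⟩
    · rw [← isOpen_compl_iff]
      have hcompl : {p : X18 | p.2 = false ∨ p.1 = ∞}ᶜ =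
          Prod.snd ⁻¹' {true} ∩ Prod.fst ⁻¹' ({∞}ᶜ) := by
        ext ⟨a, i⟩
        simp only [mem_compl_iff, mem_setOf_eq, not_or, mem_inter_iff, mem_preimage,
          mem_singleton_iff, Bool.not_eq_false]
      rw [hcompl]
      exact ((isOpen_discrete _).preimage continuous_snd).inter
        (isClosed_singleton.isOpen_compl.preimage continuous_fst)
    · refine ⟨Subtype.val ⁻¹' (Prod.snd ⁻¹' {true}),
        ((isClopen_discrete _).preimage continuous_snd).preimage continuous_subtype_val, ?_⟩
      have hSeq : {x : ({p : X18 | p.2 = false ∨ p.1 = ∞} : Set X18) |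
            ∃ y ∈ (Subtype.val ⁻¹' (Prod.snd ⁻¹' ({true} : Set Bool)) :
              Set ({p : X18 | p.2 = false ∨ p.1 = ∞} : Set X18)), (x : X18) ≤ (y : X18)} =
          {x : {p : X18 | p.2 = false ∨ p.1 = ∞} | (x : X18).1 = ∞} := by
        ext x
        simp only [mem_setOf_eq, mem_preimage, mem_singleton_iff]
        constructor
        · rintro ⟨y, hy, hle⟩
          have hy2 : (y : X18).2 = true := hy
          rcases y.prop with h | h
          · rw [hy2] at h; exact absurd h (by decide)
          · exact hle.1.trans h
        · intro hx
          exact ⟨⟨(∞, true), Or.inr rfl⟩, rfl, ⟨hx, Bool.le_true _⟩⟩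
      rw [hSeq]
      intro hclopen
      have hopen := hclopen.2
      have hz : (⟨(∞, false), Or.inl rfl⟩ : {p : X18 | p.2 = false ∨ p.1 = ∞}) ∈
          {x : {p : X18 | p.2 = false ∨ p.1 = ∞} | (x : X18).1 = ∞} := rfl
      have hmem := hopen.mem_nhds hz
      have ht : Tendsto (fun n : ℕ =>
          (⟨((n : OnePoint ℕ), false), Or.inl rfl⟩ : {p : X18 | p.2 = false ∨ p.1 = ∞}))
          atTop (nhds ⟨(∞, false), Or.inl rfl⟩) := by
        rw [tendsto_subtype_rng]
        exact tendsto_some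
      rcases (ht.eventually_mem hmem).exists with ⟨n, hn⟩
      exact OnePoint.coe_ne_infty n hn
end

section
/- Weakly Transitive Maximality Principle: let X be a compact Hausdorff totally disconnected topological space and R a continuous relation on X that is weakly transitive, i.e., Rⁿ⁺¹ ⊆ Rⁿ for some n ∈ ℕ, where R⁰ is the equality relation and Rᵏ⁺¹ = R ∘ Rᵏ. Then for every nonempty closed subset C ⊆ X there exists an eventually quasi-maximal point x ∈ C: for all y ∈ C, if (x, y) is in the reflexive-transitive closure R* of R, then (y, x) is in R*. -/
/-- Powers of a relation: `relPow R 0` is equality and `relPow R (k+1) = R ∘ relPow R k`. -/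
def relPow {X : Type*} (R : X → X → Prop) : ℕ → X → X → Prop
  | 0 => Eq
  | k + 1 => Relation.Comp R (relPow R k)

lemma relPow_succ_right {X : Type*} (R : X → X → Prop) :
    ∀ k (x y z : X), relPow R k x y → R y z → relPow R (k + 1) x z := by
  intro k
  induction k with
  | zero => intro x y z hxy hyz; cases hxy; exact ⟨z, hyz, rfl⟩
  | succ k ih =>
    rintro x y z ⟨w, hxw, hwy⟩ hyz
    exact ⟨w, hxw, ih w y z hwy hyz⟩

lemma relPow_to_rtg {X : Type*} (R : X → X → Prop) :
    ∀ k (x y : X), relPow R k x y → Relation.ReflTransGen R x y := by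
  intro k
  induction k with
  | zero => intro x y h; cases h; exact Relation.ReflTransGen.refl
  | succ k ih =>
    rintro x y ⟨z, hxz, hzy⟩
    exact Relation.ReflTransGen.head hxz (ih z y hzy)

lemma pre_clopen {X : Type*} [TopologicalSpace X] (R : X → X → Prop)
    (hRpre : ∀ U : Set X, IsClopen U → IsClopen {x : X | ∃ y ∈ U, R x y}) :
    ∀ k (U : Set X), IsClopen U → IsClopen {x : X | ∃ y ∈ U, relPow R k x y} := by
  intro k
  induction k with
  | zero =>
    intro U hU
    convert hU using 1
    ext x
    simp [relPow]
  | succ k ih =>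
    intro U hU
    convert hRpre _ (ih U hU) using 1
    ext x
    simp only [relPow, Relation.Comp, Set.mem_setOf_eq]
    tauto

/-- Key compactness lemma: a point in the "closure" of `relPow R k x` is related. -/
lemma relPow_of_clopen {X : Type*} [TopologicalSpace X] [CompactSpace X] [T2Space X]
    [TotallyDisconnectedSpace X] (R : X → X → Prop)
    (hRcl : ∀ x : X, IsClosed {y : X | R x y})
    (hRpre : ∀ U : Set X, IsClopen U → IsClopen {x : X | ∃ y ∈ U, R x y}) :
    ∀ k (x y : X), (∀ U : Set X, IsClopen U → y ∈ U → ∃ y' ∈ U, relPow R k x y') →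
      relPow R k x y := by
  intro k
  induction k with
  | zero =>
    intro x y h
    by_contra hne
    obtain ⟨U, hU, hyU, hxU⟩ := exists_isClopen_of_totally_separated
      (show y ≠ x from fun e => hne (e.symm : relPow R 0 x y))
    obtain ⟨y', hy'U, hy'⟩ := h U hU hyU
    exact hxU (hy' ▸ hy'U)
  | succ k ih =>
    intro x y h
    -- index type: clopen sets containing y
    let ι := {U : Set X // IsClopen U ∧ y ∈ U}
    have hι : Nonempty ι := ⟨⟨Set.univ, isClopen_univ, Set.mem_univ y⟩⟩
    let F : ι → Set X := fun U => {z | R x z} ∩ {z | ∃ y' ∈ U.1, relPow R k z y'}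
    have hFcl : ∀ U : ι, IsClosed (F U) := fun U =>
      (hRcl x).inter (pre_clopen R hRpre k U.1 U.2.1).isClosed
    have hFne : ∀ U : ι, (F U).Nonempty := by
      rintro ⟨U, hU, hyU⟩
      obtain ⟨y', hy'U, z, hxz, hzy'⟩ := h U hU hyU
      exact ⟨z, hxz, y', hy'U, hzy'⟩
    have hdir : Directed (· ⊇ ·) F := by
      rintro ⟨U, hU, hyU⟩ ⟨V, hV, hyV⟩
      refine ⟨⟨U ∩ V, hU.inter hV, ⟨hyU, hyV⟩⟩, ?_, ?_⟩ <;>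
        · rintro z ⟨hz, y', ⟨h1, h2⟩, h3⟩
          exact ⟨hz, y', by first | exact h1 | exact h2, h3⟩
    obtain ⟨z, hz⟩ := IsCompact.nonempty_iInter_of_directed_nonempty_isCompact_isClosed
      F hdir hFne (fun U => (hFcl U).isCompact) hFcl
    simp only [Set.mem_iInter] at hz
    have hxz : R x z := (hz ⟨Set.univ, isClopen_univ, Set.mem_univ y⟩).1
    have : relPow R k z y := by
      apply ih
      intro U hU hyU
      exact (hz ⟨U, hU, hyU⟩).2
    exact ⟨z, hxz, this⟩

/-- Weakly Transitive Maximality Principle: if `X` is a Stone space and `R` a continuous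
relation with `Rⁿ⁺¹ ⊆ Rⁿ` for some `n`, then every nonempty closed `C ⊆ X` contains an
eventually quasi-maximal point: `x ∈ C` such that for all `y ∈ C`, `R* x y` implies
`R* y x`, where `R*` is the reflexive-transitive closure of `R`. -/
theorem stmt_19 (X : Type*) [TopologicalSpace X] [CompactSpace X] [T2Space X]
    [TotallyDisconnectedSpace X] (R : X → X → Prop)
    (hRcl : ∀ x : X, IsClosed {y : X | R x y})
    (hRpre : ∀ U : Set X, IsClopen U → IsClopen {x : X | ∃ y ∈ U, R x y})
    (n : ℕ) (hwt : ∀ x y : X, relPow R (n + 1) x y → relPow R n x y)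
    (C : Set X) (hC : IsClosed C) (hCne : C.Nonempty) :
    ∃ x ∈ C, ∀ y ∈ C, Relation.ReflTransGen R x y → Relation.ReflTransGen R y x := by
  classical
  -- T is the bounded reflexive transitive closure
  set T : X → X → Prop := fun x y => ∃ k ≤ n, relPow R k x y with hT
  have hTrtg : ∀ x y, T x y → Relation.ReflTransGen R x y := by
    rintro x y ⟨k, _, h⟩; exact relPow_to_rtg R k x y h
  have hrtgT : ∀ x y, Relation.ReflTransGen R x y → T x y := by
    intro x y h
    induction h with
    | refl => exact ⟨0, Nat.zero_le n, rfl⟩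
    | tail hab hbc ih =>
      obtain ⟨k, hk, hp⟩ := ih
      have h1 := relPow_succ_right R k _ _ _ hp hbc
      rcases Nat.lt_or_ge k n with hlt | hge
      · exact ⟨k + 1, hlt, h1⟩
      · have hkn : k = n := le_antisymm hk hge
        rw [hkn] at h1
        exact ⟨n, le_refl n, hwt _ _ h1⟩
  -- T-sections are closed
  have hTcl : ∀ x : X, IsClosed {y | T x y} := by
    intro x
    have : {y | T x y} = ⋃ k ∈ Finset.range (n + 1), {y | relPow R k x y} := by
      ext y
      simp only [Set.mem_iUnion, Finset.mem_range, Set.mem_setOf_eq, Nat.lt_succ_iff, hT, exists_prop]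
    rw [this]
    apply isClosed_biUnion_finset
    intro k _
    have : IsClosed {y | relPow R k x y}ᶜᶜ := by
      rw [compl_compl]
      rw [← isOpen_compl_iff]
      rw [isOpen_iff_forall_mem_open]
      intro y hy
      simp only [Set.mem_compl_iff, Set.mem_setOf_eq] at hy
      by_contra hcon
      push_neg at hcon
      have : ∀ U : Set X, IsClopen U → y ∈ U → ∃ y' ∈ U, relPow R k x y' := by
        intro U hU hyU
        by_contra hne
        push_neg at hne
        refine hcon {y' ∈ U | ¬ relPow R k x y'} ?_ ?_ ?_
        · rintro z ⟨_, hz⟩; exact hz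
        · have : {y' ∈ U | ¬ relPow R k x y'} = U := by
            ext z; constructor
            · rintro ⟨h1, _⟩; exact h1
            · intro h1; exact ⟨h1, hne z h1⟩
          rw [this]; exact hU.isOpen
        · exact ⟨hyU, hy⟩
      exact hy (relPow_of_clopen R hRcl hRpre k x y this)
    rwa [compl_compl] at this
  -- Zorn's lemma on nonempty closed T-closed subsets of C
  set S : Set (Set X) := {D | D ⊆ C ∧ IsClosed D ∧ D.Nonempty ∧
    ∀ x ∈ D, ∀ y ∈ C, T x y → y ∈ D} with hS
  have hCS : C ∈ S := ⟨le_refl C, hC, hCne, fun _ _ y hy _ => hy⟩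
  obtain ⟨D, _, hDS, hDmin⟩ := zorn_superset_nonempty S (fun c hcS hchain hcne => by
    refine ⟨⋂ D ∈ c, D, ⟨?_, ?_, ?_, ?_⟩, fun s hs => Set.biInter_subset_of_mem hs⟩
    · obtain ⟨D0, hD0⟩ := hcne
      exact (Set.biInter_subset_of_mem hD0).trans (hcS hD0).1
    · exact isClosed_biInter (fun D hD => (hcS hD).2.1)
    · haveI : Nonempty c := hcne.to_subtype
      have := IsCompact.nonempty_iInter_of_directed_nonempty_isCompact_isClosed
        (fun D : c => (D : Set X))
        (fun D E => by
          rcases hchain.total D.2 E.2 with h | h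
          · exact ⟨D, le_refl _, h⟩
          · exact ⟨E, h, le_refl _⟩)
        (fun D => (hcS D.2).2.2.1)
        (fun D => (hcS D.2).2.1.isCompact)
        (fun D => (hcS D.2).2.1)
      obtain ⟨z, hz⟩ := this
      refine ⟨z, ?_⟩
      simp only [Set.mem_iInter] at hz ⊢
      exact fun D hD => hz ⟨D, hD⟩
    · intro x hx y hy hxy
      simp only [Set.mem_iInter] at hx ⊢
      intro D hD
      exact (hcS hD).2.2.2 x (hx D hD) y hy hxy) C hCS
  -- D is a minimal element of S
  obtain ⟨hDC, hDcl, ⟨x, hxD⟩, hDT⟩ := hDS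
  have key : ∀ z ∈ D, D ⊆ {w ∈ C | T z w} := by
    intro z hzD
    have hES : {w ∈ C | T z w} ∈ S := by
      refine ⟨fun w hw => hw.1, ?_, ⟨z, hDC hzD, 0, Nat.zero_le n, rfl⟩, ?_⟩
      · exact (hC.inter (hTcl z)).preimage continuous_id |>.mono le_rfl |>.mono le_rfl
      · rintro a ⟨haC, haT⟩ b hbC hab
        exact ⟨hbC, hrtgT _ _ ((hTrtg _ _ haT).trans (hTrtg _ _ hab))⟩
    have hsub : {w ∈ C | T z w} ⊆ D := fun w hw => hDT z hzD w hw.1 hw.2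
    exact hDmin hES hsub
  refine ⟨x, hDC hxD, fun y hyC hxy => ?_⟩
  have hyD : y ∈ D := hDT x hxD y hyC (hrtgT _ _ hxy)
  have : x ∈ {w ∈ C | T y w} := key y hyD hxD
  exact hTrtg _ _ this.2
end
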